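/- arXiv:1408.4433 — 2 statements merged into one kernel-verified Lean document; each statement's English description precedes it below -/
import Mathlib

section
/- Let d ≥ 1, let m ≤ k be positive integers, let δ > 0 with k ≥ 4dm/δ, let C ⊆ Σ^m, and let w ∈ Σ^k. If Σ_{r∈Λ_{k−m+1}} 1[w(Λ_m + r) ∈ C] ≥ (1 − δ/4)(k−m+1)^d, then there exists p ∈ Λ_m such that the number of r ∈ m·ℤ^d with Λ_m + r + p ⊆ Λ_k and w(Λ_m + r + p) ∈ C is at least (1 − δ)(k/m)^d. -/
/-! Reducing the sites of `Λ_{k-m+1}` modulo `m` covers the good block positions by the `m^d`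
shifted grids `p + m ℕ^d`, `p ∈ Λ_m`, so some grid carries at least the average
`(1 - δ/4)(k-m+1)^d / m^d` good blocks. Bernoulli's inequality gives
`((k-m+1)/k)^d ≥ 1 - dm/k ≥ 1 - δ/4`, and `(1 - δ/4)^2 ≥ 1 - δ`, so this average is at least
`(1 - δ)(k/m)^d`. -/

open MeasureTheory Filter Topology

namespace SRU1408

/-- A site of the lattice `ℤ_{≥0}^d`. -/
abbrev Site (d : ℕ) := Fin d → ℕ

/-- An infinite array over the alphabet `Fin A`, i.e. an element of `Σ = 𝒜^{ℤ_{≥0}^d}`. -/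
abbrev Config (A d : ℕ) := Site d → Fin A

/-- A cubical `k`-word, i.e. an element of `Σ^k = 𝒜^{Λ_k}`. -/
abbrev Word (A d k : ℕ) := (Fin d → Fin k) → Fin A

variable {A d : ℕ}

/-- The pattern of `x` on the cube `Λ_k + c`, as a `k`-word. -/
def wordAt (x : Config A d) (k : ℕ) (c : Site d) : Word A d k :=
  fun i => x fun j => c j + (i j : ℕ)

/-- The lattice shift `σ_r`. -/
def shift (r : Site d) (x : Config A d) : Config A d := fun i => x (i + r)

/-- Stationarity: invariance under all shifts. -/
def Stationary (μ : Measure (Config A d)) : Prop := ∀ r : Site d, μ.map (shift r) = μ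

/-- Ergodicity: stationary, and every measurable set invariant under all shifts is trivial. -/
def ErgodicShift (μ : Measure (Config A d)) : Prop :=
  Stationary μ ∧ ∀ E : Set (Config A d), MeasurableSet E →
    (∀ r : Site d, shift r ⁻¹' E = E) → μ E = 0 ∨ μ E = 1

/-- The `k`-word marginal distribution `μ^k`, as a probability vector on `Σ^k`. -/
noncomputable def wordDist (μ : Measure (Config A d)) (k : ℕ) : Word A d k → ℝ :=
  fun w => (μ {x | wordAt x k 0 = w}).toReal

/-- Base-`A` entropy of a probability vector. -/
noncomputable def entH (A : ℕ) {W : Type*} [Fintype W] (p : W → ℝ) : ℝ :=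
  -∑ w, p w * Real.logb A (p w)

/-- `μ` has entropy rate `h` (base-`A` logarithms): `H(μ^n)/n^d → h`. -/
def HasEntropyRate (μ : Measure (Config A d)) (h : ℝ) : Prop :=
  Tendsto (fun n : ℕ => entH A (wordDist μ n) / (n : ℝ) ^ d) atTop (𝓝 h)

/-- The pattern of a `k`-word on the sub-cube `Λ_m + c` (junk value outside the range). -/
def subw [NeZero A] {k : ℕ} (w : Word A d k) (m : ℕ) (c : Site d) : Word A d m :=
  fun i => if h : ∀ j, c j + (i j : ℕ) < k then w (fun j => ⟨c j + (i j : ℕ), h j⟩) else 0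

def gridPoint (m : ℕ) (p r : Site d) : Site d := fun j => m * r j + p j

lemma gridPoint_injective {m : ℕ} (hm : 0 < m) (p : Site d) : (gridPoint m p).Injective :=
  fun r r' h => funext fun j => by
    simpa [gridPoint, hm.ne'] using congrFun h j

lemma gridPoint_mod_div (m : ℕ) (s : Site d) :
    gridPoint m (fun j => s j % m) (fun j => s j / m) = s :=
  funext fun j => Nat.div_add_mod (s j) m

lemma ncard_le_sum_ncard_preimage_gridPoint (G : Set (Site d)) {m : ℕ} (hm : 0 < m) :
    G.ncard ≤ ∑ p ∈ Fintype.piFinset fun _ : Fin d => Finset.range m,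
      (gridPoint m p ⁻¹' G).ncard := by
  have hcover : ⋃ p ∈ Fintype.piFinset (fun _ : Fin d => Finset.range m),
      G ∩ Set.range (gridPoint m p) = G := by
    refine Set.Subset.antisymm (by simp) fun s hs => ?_
    simp only [Set.mem_iUnion, Set.mem_inter_iff, Set.mem_range, Fintype.mem_piFinset,
      Finset.mem_range]
    exact ⟨fun j => s j % m, fun j => Nat.mod_lt _ hm, hs, _, gridPoint_mod_div m s⟩
  calc G.ncard = (⋃ p ∈ Fintype.piFinset (fun _ : Fin d => Finset.range m),
        G ∩ Set.range (gridPoint m p)).ncard := by rw [hcover]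
    _ ≤ ∑ p ∈ Fintype.piFinset fun _ : Fin d => Finset.range m,
        (G ∩ Set.range (gridPoint m p)).ncard := Finset.set_ncard_biUnion_le _ _
    _ = _ := Finset.sum_congr rfl fun p _ => by
        rw [← Set.ncard_preimage_of_injective_subset_range (gridPoint_injective hm p)
          Set.inter_subset_right, Set.preimage_inter_range]

lemma one_sub_div_four_le_pow {d m k : ℕ} (hmk : m ≤ k) (hk0 : 0 < k) {δ : ℝ}
    (hk : 4 * (d : ℝ) * m ≤ δ * k) :
    1 - δ / 4 ≤ (((k - m + 1 : ℕ) : ℝ) / k) ^ d := by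
  have hk0' : (0 : ℝ) < k := by exact_mod_cast hk0
  have hmk' : (m : ℝ) / k ≤ 1 := (div_le_one hk0').2 (by exact_mod_cast hmk)
  have hdm : (d : ℝ) * (m / k) ≤ δ / 4 := by
    rw [mul_div_assoc', div_le_iff₀ hk0']
    linarith
  calc 1 - δ / 4 ≤ 1 + d * (-(m / k : ℝ)) := by linarith
    _ ≤ (1 + -(m / k : ℝ)) ^ d := one_add_mul_le_pow (by linarith) d
    _ ≤ (((k - m + 1 : ℕ) : ℝ) / k) ^ d := by
        refine pow_le_pow_left₀ (by linarith) ?_ d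
        rw [Nat.cast_add_one, Nat.cast_sub hmk, le_div_iff₀ hk0']
        field_simp
        linarith

lemma one_sub_mul_div_pow_le {d m k : ℕ} (hm : 0 < m) (hmk : m ≤ k) {δ : ℝ}
    (hδ : 0 < δ) (hδ4 : δ ≤ 4) (hk : 4 * (d : ℝ) * m ≤ δ * k) :
    (1 - δ) * ((k : ℝ) / m) ^ d ≤ (1 - δ / 4) * ((k - m + 1 : ℕ) : ℝ) ^ d / (m : ℝ) ^ d := by
  have hk0 : 0 < k := hm.trans_le hmk
  calc (1 - δ) * ((k : ℝ) / m) ^ d ≤ (1 - δ / 4) * (1 - δ / 4) * ((k : ℝ) / m) ^ d := by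
        gcongr
        nlinarith
    _ ≤ (1 - δ / 4) * (((k - m + 1 : ℕ) : ℝ) / k) ^ d * ((k : ℝ) / m) ^ d := by
        gcongr
        · linarith
        · exact one_sub_div_four_le_pow hmk hk0 hk
    _ = (1 - δ / 4) * ((k - m + 1 : ℕ) : ℝ) ^ d / (m : ℝ) ^ d := by
        rw [div_pow, div_pow]
        field_simp

theorem grid_alignment_general
    (A d : ℕ) [NeZero A]
    (m k : ℕ) (hm : 0 < m) (hmk : m ≤ k)
    (δ : ℝ) (hδ : 0 < δ) (hk : 4 * (d : ℝ) * (m : ℝ) ≤ δ * (k : ℝ))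
    (C : Set (Word A d m)) (w : Word A d k)
    (hcount : (1 - δ / 4) * ((k - m + 1 : ℕ) : ℝ) ^ d ≤
      (Set.ncard {r : Site d | (∀ j, r j < k - m + 1) ∧ subw w m r ∈ C} : ℝ)) :
    ∃ p : Site d, (∀ j, p j < m) ∧
      (1 - δ) * ((k : ℝ) / (m : ℝ)) ^ d ≤
        (Set.ncard {r : Site d | (∀ j, m * r j + p j + m ≤ k) ∧
          subw w m (fun j => m * r j + p j) ∈ C} : ℝ) := by
  obtain hδ4 | hδ4 := lt_or_ge 4 δ
  · refine ⟨0, fun _ => hm, le_trans ?_ (Nat.cast_nonneg _)⟩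
    exact mul_nonpos_of_nonpos_of_nonneg (by linarith) (by positivity)
  set P := Fintype.piFinset fun _ : Fin d => Finset.range m
  set G := {r : Site d | (∀ j, r j < k - m + 1) ∧ subw w m r ∈ C}
  have hgrid (p : Site d) : gridPoint m p ⁻¹' G = {r : Site d | (∀ j, m * r j + p j + m ≤ k) ∧
      subw w m (fun j => m * r j + p j) ∈ C} := by
    ext r
    refine and_congr_left' (forall_congr' fun j => ?_)
    simp only [gridPoint]
    omega
  have hsum : ∑ _p ∈ P, (1 - δ / 4) * ((k - m + 1 : ℕ) : ℝ) ^ d / (m : ℝ) ^ d ≤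
      ∑ p ∈ P, ((gridPoint m p ⁻¹' G).ncard : ℝ) :=
    calc ∑ _p ∈ P, (1 - δ / 4) * ((k - m + 1 : ℕ) : ℝ) ^ d / (m : ℝ) ^ d
          = (1 - δ / 4) * ((k - m + 1 : ℕ) : ℝ) ^ d := by
          have : (m : ℝ) ^ d ≠ 0 := by positivity
          simp [P, Fintype.card_piFinset, mul_div_cancel₀ _ this]
      _ ≤ G.ncard := hcount
      _ ≤ _ := by exact_mod_cast ncard_le_sum_ncard_preimage_gridPoint G hm
  obtain ⟨p, hp, hle⟩ := Finset.exists_le_of_sum_le ⟨0, by simp [P, hm]⟩ hsum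
  refine ⟨p, by simpa [P] using hp, ?_⟩
  rw [← hgrid]
  exact (one_sub_mul_div_pow_le hm hmk hδ hδ4 hk).trans hle

/-- Lemma 3.2 of the universally typical sets paper. If a `(1-δ/4)`-fraction
of all `m`-sub-blocks of `Λ_k` carry words from `C`, then for some offset `p ∈ Λ_m` at least
`(1-δ)(k/m)^d` blocks of the `p`-shifted regular `m`-grid carry words from `C`. -/
theorem grid_alignment
    (A d : ℕ) [NeZero A] (hA : 2 ≤ A) (hd : 1 ≤ d)
    (m k : ℕ) (hm : 0 < m) (hmk : m ≤ k)
    (δ : ℝ) (hδ : 0 < δ) (hk : 4 * (d : ℝ) * (m : ℝ) ≤ δ * (k : ℝ))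
    (C : Set (Word A d m)) (w : Word A d k)
    (hcount : (1 - δ / 4) * ((k - m + 1 : ℕ) : ℝ) ^ d ≤
      (Set.ncard {r : Site d | (∀ j, r j < k - m + 1) ∧ subw w m r ∈ C} : ℝ)) :
    ∃ p : Site d, (∀ j, p j < m) ∧
      (1 - δ) * ((k : ℝ) / (m : ℝ)) ^ d ≤
        (Set.ncard {r : Site d | (∀ j, m * r j + p j + m ≤ k) ∧
          subw w m (fun j => m * r j + p j) ∈ C} : ℝ) :=
  grid_alignment_general A d m k hm hmk δ hδ hk C w hcount

end SRU1408
end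

section
/- Let d ≥ 1, let m < k < n be positive integers with (k−m+1)^d ≥ (2/3)·k^d, let δ, δ′, β ∈ (0,1), let C ⊆ Σ^m, and let x^n ∈ Σ^n satisfy Σ_{r∈Λ_{n−m+1}} 1[x^n(Λ_m + r) ∈ C] ≥ (1 − δ′δβ/6)·n^d. Let λ_1, …, λ_I be pairwise disjoint translates of Λ_k contained in Λ_n with I·k^d ≥ β·n^d. Then for at least (1−δ′)·I of the indices i ∈ {1,…,I}, the word w_i = x^n(λ_i) satisfies Σ_{s∈Λ_{k−m+1}} 1[w_i(Λ_m + s) ∈ C] ≥ (1 − δ/4)·(k−m+1)^d. -/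
open MeasureTheory Filter Topology

namespace SRU1408

variable {A d : ℕ}

/-! Double counting. A translate `c + s` of a sub-block position `s` of a block `c` is a
sub-block position of `Λ_n`, and since the blocks are disjoint distinct pairs `(c, s)` give
distinct translates. So the bad sub-block positions of all blocks together are at most the
`δ'δβ/6 · n^d` bad positions of `Λ_n`. A block failing the conclusion has more than
`δ/4 · (k-m+1)^d ≥ δ/6 · k^d` bad positions, and there are at least `β n^d / k^d` blocks,
so at most a `δ'`-fraction of them can fail. -/

open scoped Finset

/-- The cube `Λ_N` as a finset of sites. -/
def box (d N : ℕ) : Finset (Site d) := Fintype.piFinset fun _ => Finset.range N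

lemma mem_box {N : ℕ} {r : Site d} : r ∈ box d N ↔ ∀ j, r j < N := by
  simp [box, Fintype.mem_piFinset]

lemma card_box (d N : ℕ) : #(box d N) = N ^ d := by
  simp [box, Fintype.card_piFinset]

lemma ncard_setOf_mem_box_and {N : ℕ} (P : Site d → Prop) [DecidablePred P] :
    {r : Site d | (∀ j, r j < N) ∧ P r}.ncard = #((box d N).filter P) := by
  rw [← Set.ncard_coe_finset]
  congr 1
  ext r
  simp [mem_box]

section Subwords

variable [NeZero A] {m k n : ℕ}

noncomputable def badSites (w : Word A d k) (m : ℕ) (C : Set (Word A d m)) : Finset (Site d) :=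
  open Classical in (box d (k - m + 1)).filter fun s => subw w m s ∉ C

lemma mem_badSites {w : Word A d k} {C : Set (Word A d m)} {s : Site d} :
    s ∈ badSites w m C ↔ (∀ j, s j < k - m + 1) ∧ subw w m s ∉ C := by
  simp [badSites, mem_box]

lemma ncard_good_add_card_badSites (w : Word A d k) (C : Set (Word A d m)) :
    {s : Site d | (∀ j, s j < k - m + 1) ∧ subw w m s ∈ C}.ncard + #(badSites w m C)
      = (k - m + 1) ^ d := by
  classical
  rw [ncard_setOf_mem_box_and, badSites, ← card_box d (k - m + 1)]
  convert Finset.card_filter_add_card_filter_not (fun s => subw w m s ∈ C)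

lemma subw_subw (w : Word A d n) {c s : Site d} (hc : ∀ j, c j + k ≤ n)
    (hs : ∀ j, s j + m ≤ k) : subw (subw w k c) m s = subw w m (c + s) := by
  funext i
  have hsi : ∀ j, s j + (i j : ℕ) < k := fun j => by have := (i j).2; have := hs j; omega
  have hcsi : ∀ j, c j + (s j + (i j : ℕ)) < n := fun j => by
    have := hsi j; have := hc j; omega
  simp only [subw, dif_pos hsi, dif_pos hcsi, Pi.add_apply, add_assoc]

lemma add_mem_badSites (w : Word A d n) (C : Set (Word A d m)) {c s : Site d}
    (hmk : m ≤ k) (hc : ∀ j, c j + k ≤ n) (hs : s ∈ badSites (subw w k c) m C) :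
    c + s ∈ badSites w m C := by
  rw [mem_badSites] at hs ⊢
  have hsm : ∀ j, s j + m ≤ k := fun j => by have := hs.1 j; omega
  refine ⟨fun j => ?_, subw_subw w hc hsm ▸ hs.2⟩
  have := hsm j; have := hc j; simp only [Pi.add_apply]; omega

lemma card_badSites_le (w : Word A d n) (C : Set (Word A d m)) (hm : 0 < m) (hmn : m ≤ n)
    {ε : ℝ}
    (hw : (1 - ε) * (n : ℝ) ^ d ≤
      ({r : Site d | (∀ j, r j < n - m + 1) ∧ subw w m r ∈ C}.ncard : ℝ)) :
    (#(badSites w m C) : ℝ) ≤ ε * (n : ℝ) ^ d := by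
  have hsplit := congrArg (Nat.cast : ℕ → ℝ) (ncard_good_add_card_badSites w C)
  push_cast at hsplit
  have hbox : ((n - m + 1 : ℕ) : ℝ) ^ d ≤ (n : ℝ) ^ d := by
    gcongr
    exact_mod_cast (by omega : n - m + 1 ≤ n)
  push_cast at hbox
  linarith

lemma mul_le_card_badSites (w : Word A d k) (C : Set (Word A d m)) {t : ℝ}
    (h : ¬(1 - t) * ((k - m + 1 : ℕ) : ℝ) ^ d ≤
      ({s : Site d | (∀ j, s j < k - m + 1) ∧ subw w m s ∈ C}.ncard : ℝ)) :
    t * ((k - m + 1 : ℕ) : ℝ) ^ d ≤ #(badSites w m C) := by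
  have hsplit := congrArg (Nat.cast : ℕ → ℝ) (ncard_good_add_card_badSites w C)
  push_cast at hsplit ⊢
  push_cast at h
  linarith

end Subwords

lemma add_ne_add_of_disjoint_blocks {k : ℕ} {c c' s s' : Site d}
    (hcc' : ∃ j, c j + k ≤ c' j ∨ c' j + k ≤ c j) (hs : ∀ j, s j < k) (hs' : ∀ j, s' j < k) :
    c + s ≠ c' + s' := by
  obtain ⟨j, hj⟩ := hcc'
  intro h
  have := congrFun h j; have := hs j; have := hs' j
  simp only [Pi.add_apply] at *
  omega

lemma sum_card_le_card_of_disjoint_blocks {k : ℕ} (F : Finset (Site d))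
    (S : Site d → Finset (Site d)) (T : Finset (Site d))
    (hdisj : ∀ c ∈ F, ∀ c' ∈ F, c ≠ c' → (∃ j, c j + k ≤ c' j ∨ c' j + k ≤ c j))
    (hS : ∀ c ∈ F, ∀ s ∈ S c, ∀ j, s j < k) (hT : ∀ c ∈ F, ∀ s ∈ S c, c + s ∈ T) :
    ∑ c ∈ F, #(S c) ≤ #T := by
  classical
  have hpair : (F : Set (Site d)).PairwiseDisjoint fun c => (S c).image (c + ·) := by
    intro c hc c' hc' hne
    simp only [Function.onFun, Finset.disjoint_left, Finset.mem_image]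
    rintro _ ⟨s, hs, rfl⟩ ⟨s', hs', heq⟩
    exact add_ne_add_of_disjoint_blocks (hdisj c hc c' hc' hne) (hS c hc s hs)
      (hS c' hc' s' hs') heq.symm
  calc ∑ c ∈ F, #(S c) = ∑ c ∈ F, #((S c).image (c + ·)) := by
        refine Finset.sum_congr rfl fun c _ => ?_
        rw [Finset.card_image_of_injective _ (add_right_injective c)]
    _ = #(F.biUnion fun c => (S c).image (c + ·)) := (Finset.card_biUnion hpair).symm
    _ ≤ #T := Finset.card_le_card fun r hr => by
        obtain ⟨c, hc, s, hs, rfl⟩ := by simpa using hr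
        exact hT c hc s hs

lemma le_mul_of_bulk_of_volume {B F N κ K δ δ' β : ℝ} (hδ : 0 < δ) (hδ' : 0 ≤ δ')
    (hκ : 0 < κ) (hK : 2 / 3 * κ ≤ K) (hB : 0 ≤ B) (hvol : β * N ≤ F * κ)
    (hdef : B * (δ / 4 * K) ≤ δ' * δ * β / 6 * N) : B ≤ δ' * F := by
  refine le_of_mul_le_mul_right ?_ (by positivity : 0 < δ / 6 * κ)
  calc B * (δ / 6 * κ) = B * (δ / 4 * (2 / 3 * κ)) := by ring
    _ ≤ B * (δ / 4 * K) := by gcongr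
    _ ≤ δ' * δ / 6 * (β * N) := by linarith
    _ ≤ δ' * δ / 6 * (F * κ) := by gcongr
    _ = δ' * F * (δ / 6 * κ) := by ring

theorem most_blocks_mostly_typical_general
    (A d : ℕ) [NeZero A]
    (m k n : ℕ) (hm : 0 < m) (hmk : m < k) (hkn : k < n)
    (hbulk : (2 / 3 : ℝ) * (k : ℝ) ^ d ≤ ((k - m + 1 : ℕ) : ℝ) ^ d)
    (δ δ' β : ℝ) (hδ0 : 0 < δ) (hδ'0 : 0 < δ')
    (C : Set (Word A d m)) (xw : Word A d n)
    (hx : (1 - δ' * δ * β / 6) * (n : ℝ) ^ d ≤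
      (Set.ncard {r : Site d | (∀ j, r j < n - m + 1) ∧ subw xw m r ∈ C} : ℝ))
    (F : Finset (Site d))
    (hsub : ∀ c ∈ F, ∀ j, c j + k ≤ n)
    (hdisj : ∀ c ∈ F, ∀ c' ∈ F, c ≠ c' → (∃ j, c j + k ≤ c' j ∨ c' j + k ≤ c j))
    (hvol : β * (n : ℝ) ^ d ≤ (F.card : ℝ) * (k : ℝ) ^ d) :
    (1 - δ') * (F.card : ℝ) ≤
      (Set.ncard {c : Site d | c ∈ F ∧
        (1 - δ / 4) * ((k - m + 1 : ℕ) : ℝ) ^ d ≤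
          (Set.ncard {s : Site d | (∀ j, s j < k - m + 1) ∧
            subw (subw xw k c) m s ∈ C} : ℝ)} : ℝ) := by
  classical
  set typical : Site d → Prop := fun c => (1 - δ / 4) * ((k - m + 1 : ℕ) : ℝ) ^ d ≤
    ({s : Site d | (∀ j, s j < k - m + 1) ∧ subw (subw xw k c) m s ∈ C}.ncard : ℝ)
  set defects : Site d → ℕ := fun c => #(badSites (subw xw k c) m C)
  have hsum : ∑ c ∈ F, defects c ≤ #(badSites xw m C) :=
    sum_card_le_card_of_disjoint_blocks F _ _ hdisj
      (fun c _ s hs j => by have := (mem_badSites.1 hs).1 j; omega)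
      (fun c hc s hs => add_mem_badSites xw C hmk.le (hsub c hc) hs)
  have hatypical : (#(F.filter (¬typical ·)) : ℝ) * (δ / 4 * ((k - m + 1 : ℕ) : ℝ) ^ d)
      ≤ ∑ c ∈ F, (defects c : ℝ) := by
    rw [← nsmul_eq_mul]
    exact (Finset.card_nsmul_le_sum _ _ _ fun c hc =>
      mul_le_card_badSites _ C (Finset.mem_filter.1 hc).2).trans
      (Finset.sum_le_sum_of_subset_of_nonneg (Finset.filter_subset _ _) fun _ _ _ => by positivity)
  have hfew : (#(F.filter (¬typical ·)) : ℝ) ≤ δ' * #F := by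
    refine le_mul_of_bulk_of_volume hδ0 hδ'0.le
      (pow_pos (Nat.cast_pos.2 (hm.trans hmk)) d) hbulk (by positivity) hvol ?_
    refine hatypical.trans (le_trans ?_ (card_badSites_le xw C hm (hmk.trans hkn).le hx))
    exact_mod_cast hsum
  have hsplit : (#(F.filter typical) : ℝ) + #(F.filter (¬typical ·)) = #F := by
    exact_mod_cast Finset.card_filter_add_card_filter_not typical
  have hgoal : {c : Site d | c ∈ F ∧ typical c} = ↑(F.filter typical) := by ext; simp
  rw [hgoal, Set.ncard_coe_finset]
  linarith

/-- If all but a `δ'δβ/6`-fraction of the `m`-sub-blocks of `Λ_n` carry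
words from `C`, then in any family of pairwise disjoint `k`-blocks in `Λ_n` covering at least
a `β`-fraction of `Λ_n`, at least a `(1-δ')`-fraction of the blocks hold words having at
least a `(1-δ/4)`-fraction of their `m`-sub-blocks carrying words from `C`. -/
theorem most_blocks_mostly_typical
    (A d : ℕ) [NeZero A] (hA : 2 ≤ A) (hd : 1 ≤ d)
    (m k n : ℕ) (hm : 0 < m) (hmk : m < k) (hkn : k < n)
    (hbulk : (2 / 3 : ℝ) * (k : ℝ) ^ d ≤ ((k - m + 1 : ℕ) : ℝ) ^ d)
    (δ δ' β : ℝ) (hδ0 : 0 < δ) (hδ1 : δ < 1) (hδ'0 : 0 < δ') (hδ'1 : δ' < 1)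
    (hβ0 : 0 < β) (hβ1 : β < 1)
    (C : Set (Word A d m)) (xw : Word A d n)
    (hx : (1 - δ' * δ * β / 6) * (n : ℝ) ^ d ≤
      (Set.ncard {r : Site d | (∀ j, r j < n - m + 1) ∧ subw xw m r ∈ C} : ℝ))
    (F : Finset (Site d))
    (hsub : ∀ c ∈ F, ∀ j, c j + k ≤ n)
    (hdisj : ∀ c ∈ F, ∀ c' ∈ F, c ≠ c' → (∃ j, c j + k ≤ c' j ∨ c' j + k ≤ c j))
    (hvol : β * (n : ℝ) ^ d ≤ (F.card : ℝ) * (k : ℝ) ^ d) :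
    (1 - δ') * (F.card : ℝ) ≤
      (Set.ncard {c : Site d | c ∈ F ∧
        (1 - δ / 4) * ((k - m + 1 : ℕ) : ℝ) ^ d ≤
          (Set.ncard {s : Site d | (∀ j, s j < k - m + 1) ∧
            subw (subw xw k c) m s ∈ C} : ℝ)} : ℝ) :=
  most_blocks_mostly_typical_general A d m k n hm hmk hkn hbulk δ δ' β hδ0 hδ'0 C xw hx F hsub hdisj
    hvol

end SRU1408
end
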